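/- Let f : (0,∞) → ℝ be a nonnegative measurable function with ∫₀^∞ f = 1, and let φ : (0,∞) → ℝ be a positive measurable function with ∫₀^∞ φ f = 1 and ∫₀^∞ φ^ν f = 1, where ν = α/(α-1) for some 0 < α < 1. Then φ = 1 almost everywhere with respect to the measure f dx. -/

import Mathlib

open MeasureTheory Real Set

private lemma CARA_key_lt {ν t : ℝ} (hν : ν < 0) (ht : 0 < t) (ht1 : t ≠ 1) :
    1 - ν < t ^ ν - ν * t := by
  have h1ν : (0:ℝ) < 1 - ν := by linarith
  set w₁ : ℝ := 1 / (1 - ν) with hw₁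
  set w₂ : ℝ := -ν / (1 - ν) with hw₂
  have hw₁pos : 0 < w₁ := by positivity
  have hw₂pos : 0 < w₂ := by
    apply div_pos <;> linarith
  have hsum : w₁ + w₂ = 1 := by
    rw [hw₁, hw₂, ← add_div]
    field_simp
    ring
  have hx : (0:ℝ) < t ^ ν := rpow_pos_of_pos ht ν
  have hxy : t ^ ν ≠ t := by
    intro h
    have hlog : ν * Real.log t = Real.log t := by
      rw [← Real.log_rpow ht, h]
    have hlt0 : Real.log t ≠ 0 := by
      intro h0
      rcases Real.log_eq_zero.1 h0 with h' | h' | h'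
      · linarith
      · exact ht1 h'
      · linarith
    have := mul_right_cancel₀ hlt0 (hlog.trans (one_mul (Real.log t)).symm)
    linarith
  have hconc := strictConcaveOn_log_Ioi.2 (mem_Ioi.2 hx) (mem_Ioi.2 ht) hxy hw₁pos hw₂pos hsum
  have hlogs : w₁ • Real.log (t ^ ν) + w₂ • Real.log t = 0 := by
    rw [Real.log_rpow ht]
    simp only [smul_eq_mul, hw₁, hw₂]
    field_simp
    try ring
  rw [hlogs] at hconc
  have hz : 0 < w₁ • (t ^ ν) + w₂ • t := by
    simp only [smul_eq_mul]; positivity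
  have h1lt : 1 < w₁ • (t ^ ν) + w₂ • t := by
    have := Real.exp_lt_exp.2 hconc
    rwa [Real.exp_zero, Real.exp_log hz] at this
  have := (mul_lt_mul_iff_right₀ h1ν).2 h1lt
  simp only [smul_eq_mul] at this
  rw [mul_one] at this
  calc 1 - ν < (1 - ν) * (w₁ * t ^ ν + w₂ * t) := this
    _ = t ^ ν - ν * t := by
        rw [hw₁, hw₂]
        field_simp
        ring

private lemma CARA_key_le {ν t : ℝ} (hν : ν < 0) (ht : 0 < t) :
    1 - ν ≤ t ^ ν - ν * t := by
  rcases eq_or_ne t 1 with rfl | h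
  · simp
  · exact (CARA_key_lt hν ht h).le

/-- CARA example: if `f` is a probability density on `(0,∞)`, `φ > 0` on `(0,∞)` satisfies
`∫ φ f = 1` and `∫ φ^ν f = 1` with `ν = α/(α-1)`, `0 < α < 1`, then `φ = 1` a.e. with respect
to the measure `f dx`. -/
theorem CARA_density_constant (α : ℝ) (hα0 : 0 < α) (hα1 : α < 1)
    (f φ : ℝ → ℝ) (hf : Measurable f) (hφ : Measurable φ)
    (hfnn : ∀ x ∈ Ioi (0:ℝ), 0 ≤ f x)
    (hφpos : ∀ x ∈ Ioi (0:ℝ), 0 < φ x)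
    (hfint : IntegrableOn f (Ioi 0))
    (hφfint : IntegrableOn (fun x => φ x * f x) (Ioi 0))
    (hφνfint : IntegrableOn (fun x => φ x ^ (α / (α - 1)) * f x) (Ioi 0))
    (hf1 : ∫ x in Ioi (0:ℝ), f x = 1)
    (hφf1 : ∫ x in Ioi (0:ℝ), φ x * f x = 1)
    (hφνf1 : ∫ x in Ioi (0:ℝ), φ x ^ (α / (α - 1)) * f x = 1) :
    φ =ᵐ[(volume.restrict (Ioi 0)).withDensity (fun x => ENNReal.ofReal (f x))]
      fun _ => (1 : ℝ) := by
  set ν : ℝ := α / (α - 1) with hνdef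
  have hν : ν < 0 := div_neg_of_pos_of_neg hα0 (by linarith)
  set g : ℝ → ℝ := fun x => φ x ^ ν * f x - (ν * (φ x * f x) + (1 - ν) * f x) with hg
  have hgint : IntegrableOn g (Ioi 0) :=
    hφνfint.sub ((hφfint.const_mul ν).add (hfint.const_mul (1 - ν)))
  have hgnn : ∀ x ∈ Ioi (0:ℝ), 0 ≤ g x := by
    intro x hx
    have h1 := CARA_key_le hν (hφpos x hx)
    have h2 := hfnn x hx
    have : (1 - ν) * f x ≤ (φ x ^ ν - ν * φ x) * f x :=
      mul_le_mul_of_nonneg_right h1 h2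
    simp only [hg]; nlinarith
  have hgzero : ∫ x in Ioi (0:ℝ), g x = 0 := by
    have h12 : IntegrableOn (fun x => ν * (φ x * f x) + (1 - ν) * f x) (Ioi 0) :=
      (hφfint.const_mul ν).add (hfint.const_mul (1 - ν))
    have h1 : ∫ x in Ioi (0:ℝ), g x
        = (∫ x in Ioi (0:ℝ), φ x ^ ν * f x)
          - ∫ x in Ioi (0:ℝ), (ν * (φ x * f x) + (1 - ν) * f x) :=
      integral_sub hφνfint h12
    have h2 : ∫ x in Ioi (0:ℝ), (ν * (φ x * f x) + (1 - ν) * f x)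
        = ν * (∫ x in Ioi (0:ℝ), φ x * f x) + (1 - ν) * ∫ x in Ioi (0:ℝ), f x := by
      rw [integral_add (hφfint.const_mul ν) (hfint.const_mul (1 - ν)),
        integral_const_mul, integral_const_mul]
    rw [h1, h2, hφνf1, hφf1, hf1]
    ring
  have hgae : g =ᵐ[volume.restrict (Ioi 0)] 0 := by
    have hnn : 0 ≤ᵐ[volume.restrict (Ioi 0)] g :=
      (ae_restrict_iff' measurableSet_Ioi).2 (Filter.Eventually.of_forall hgnn)
    have := (integral_eq_zero_iff_of_nonneg_ae hnn hgint).1 hgzero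
    exact this
  rw [Filter.EventuallyEq, ae_withDensity_iff (hf.ennreal_ofReal)]
  filter_upwards [hgae, ae_restrict_mem measurableSet_Ioi] with x hgx hxmem hfx
  have hfpos : 0 < f x := by
    by_contra h
    exact hfx (ENNReal.ofReal_eq_zero.2 (le_of_not_gt h))
  by_contra hne
  have hlt := CARA_key_lt hν (hφpos x hxmem) hne
  have : 0 < g x := by
    have := (mul_lt_mul_iff_left₀ hfpos).2 hlt
    simp only [hg]; nlinarith
  rw [Pi.zero_apply] at hgx
  linarith
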